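/- arXiv:1312.1554 — 3 statements merged into one kernel-verified Lean document; each statement's English description precedes it below -/
import Mathlib

section
/- For every positive integer n, the sum over k from 1 to n of ((-1)^k / k) * C(n,k) * C(n+k,k) equals -2 * H_n, where H_n is the n-th harmonic number. -/
open Finset

-- alternating binomial sum in ℚ
lemma alt_sum (n : ℕ) (hn : 1 ≤ n) :
    ∑ k ∈ Finset.range (n+1), (-1 : ℚ)^k * (n.choose k) = 0 := by
  have h := Int.alternating_sum_range_choose_of_ne (n := n) (by omega)
  have : ((∑ m ∈ range (n + 1), ((-1) ^ m * n.choose m : ℤ) : ℤ) : ℚ) = 0 := by rw [h]; simp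
  push_cast at this
  exact this

lemma Icc_split (n : ℕ) (f : ℕ → ℚ) :
    ∑ k ∈ Finset.range (n+1), f k = f 0 + ∑ k ∈ Finset.Icc 1 n, f k := by
  have h : Finset.Icc 1 n = (Finset.range (n+1)).erase 0 := by
    ext x; simp [Nat.lt_succ_iff]; omega
  rw [h, Finset.add_sum_erase]
  simp

-- L1
lemma L1 (n : ℕ) :
    ∑ k ∈ Finset.Icc 1 n, (-1:ℚ)^k * (n.choose k) / k = -∑ j ∈ Finset.Icc 1 n, (1:ℚ)/j := by
  induction n with
  | zero => simp
  | succ n ih =>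
    have hsplit : ∀ k ∈ Finset.Icc 1 (n+1),
        (-1:ℚ)^k * ((n+1).choose k) / k =
        (-1:ℚ)^k * (n.choose k) / k + (-1:ℚ)^k * ((n+1).choose k) / (n+1) := by
      intro k hk
      simp only [Finset.mem_Icc] at hk
      obtain ⟨hk1, hk2⟩ := hk
      obtain ⟨m, rfl⟩ : ∃ m, k = m + 1 := ⟨k - 1, by omega⟩
      have hpascal : (n+1).choose (m+1) = n.choose m + n.choose (m+1) := Nat.choose_succ_succ n m
      have hid : ((n:ℚ)+1) * (n.choose m) = ((n+1).choose (m+1)) * (m+1) := by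
        have := Nat.add_one_mul_choose_eq n m
        exact_mod_cast congrArg (Nat.cast : ℕ → ℚ) this
      have hk0 : ((m:ℚ)+1) ≠ 0 := by positivity
      have hn0 : ((n:ℚ)+1) ≠ 0 := by positivity
      have hp : (((n+1).choose (m+1) : ℕ) : ℚ) = n.choose m + n.choose (m+1) := by
        exact_mod_cast hpascal
      rw [hp] at hid ⊢
      field_simp
      push_cast
      linear_combination hid
    rw [Finset.sum_congr rfl hsplit, Finset.sum_add_distrib]
    have hA : ∑ k ∈ Finset.Icc 1 (n+1), (-1:ℚ)^k * (n.choose k) / k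
        = ∑ k ∈ Finset.Icc 1 n, (-1:ℚ)^k * (n.choose k) / k := by
      rw [Finset.sum_Icc_succ_top (by omega)]
      simp [Nat.choose_eq_zero_of_lt (by omega : n < n + 1)]
    have hB : ∑ k ∈ Finset.Icc 1 (n+1), (-1:ℚ)^k * ((n+1).choose k) / (n+1)
        = -1/(n+1) := by
      rw [← Finset.sum_div]
      have h0 := Icc_split (n+1) (fun k => (-1:ℚ)^k * ((n+1).choose k))
      rw [alt_sum (n+1) (by omega)] at h0
      simp only [pow_zero, one_mul, Nat.choose_zero_right, Nat.cast_one] at h0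
      have h2 : ∑ k ∈ Finset.Icc 1 (n+1), (-1:ℚ)^k * ((n+1).choose k) = -1 := by linarith
      rw [h2]
    rw [hA, hB, ih, Finset.sum_Icc_succ_top (by omega : 1 ≤ n + 1)]
    push_cast
    ring

-- L3: ∑_{m=0}^n (-1)^m C(n,m) C(m,r) = 0 for r < n
lemma L3 (n r : ℕ) (hr : r < n) :
    ∑ m ∈ Finset.range (n+1), (-1:ℚ)^m * (n.choose m) * (m.choose r) = 0 := by
  have hsplit : Finset.range (n+1) = Finset.Ico 0 r ∪ Finset.Ico r (n+1) := by
    rw [Finset.range_eq_Ico, ← Finset.Ico_union_Ico_eq_Ico (Nat.zero_le r) (by omega : r ≤ n + 1)]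
  rw [hsplit, Finset.sum_union (by
    apply Finset.Ico_disjoint_Ico_consecutive)]
  have h1 : ∑ m ∈ Finset.Ico 0 r, (-1:ℚ)^m * (n.choose m) * (m.choose r) = 0 := by
    apply Finset.sum_eq_zero
    intro m hm
    simp only [Finset.mem_Ico] at hm
    rw [Nat.choose_eq_zero_of_lt hm.2]
    simp
  rw [h1, zero_add, Finset.sum_Ico_eq_sum_range]
  have hre : n + 1 - r = (n - r) + 1 := by omega
  rw [hre]
  have h2 : ∀ i ∈ Finset.range ((n-r)+1),
      (-1:ℚ)^(r+i) * (n.choose (r+i)) * ((r+i).choose r)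
      = ((-1:ℚ)^r * (n.choose r)) * ((-1:ℚ)^i * ((n-r).choose i)) := by
    intro i hi
    simp only [Finset.mem_range] at hi
    have hmul : n.choose (r+i) * (r+i).choose r = n.choose r * (n-r).choose i := by
      have := Nat.choose_mul (n := n) (k := r + i) (s := r) (by omega)
      simpa using this
    have : ((n.choose (r+i) : ℚ)) * ((r+i).choose r) = (n.choose r) * ((n-r).choose i) := by
      exact_mod_cast congrArg (Nat.cast : ℕ → ℚ) hmul
    rw [pow_add]
    linear_combination ((-1:ℚ)^r * (-1:ℚ)^i) * this
  rw [Finset.sum_congr rfl h2, ← Finset.mul_sum, alt_sum (n - r) (by omega), mul_zero]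

-- L2
lemma L2 (j : ℕ) (hj : 1 ≤ j) : ∀ n, j ≤ n →
    ∑ k ∈ Finset.Icc 1 n, (-1:ℚ)^k * (n.choose k) * ((k-1).choose (j-1)) = (-1)^j := by
  intro n
  induction n with
  | zero => omega
  | succ n ih =>
    intro hjn
    rcases Nat.lt_or_ge n j with hbase | hstep
    · -- base case: n + 1 = j
      have hnj : j = n + 1 := by omega
      subst hnj
      rw [Finset.sum_eq_single (n+1)]
      · simp [Nat.choose_self]
      · intro k hk hne
        simp only [Finset.mem_Icc] at hk
        rw [Nat.choose_eq_zero_of_lt (show k - 1 < n + 1 - 1 by omega)]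
        simp
      · intro h
        simp only [Finset.mem_Icc] at h
        omega
    · -- inductive step
      have hsplit : ∀ k ∈ Finset.Icc 1 (n+1),
          (-1:ℚ)^k * ((n+1).choose k) * ((k-1).choose (j-1)) =
          (-1:ℚ)^k * (n.choose k) * ((k-1).choose (j-1)) +
          (-1:ℚ)^k * (n.choose (k-1)) * ((k-1).choose (j-1)) := by
        intro k hk
        simp only [Finset.mem_Icc] at hk
        obtain ⟨m, rfl⟩ : ∃ m, k = m + 1 := ⟨k - 1, by omega⟩
        have hp : (((n+1).choose (m+1) : ℕ) : ℚ) = n.choose (m+1) + n.choose m := by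
          rw [Nat.choose_succ_succ n m]; push_cast; ring
        rw [hp]
        simp only [Nat.add_sub_cancel]
        ring
      rw [Finset.sum_congr rfl hsplit, Finset.sum_add_distrib]
      have hA : ∑ k ∈ Finset.Icc 1 (n+1), (-1:ℚ)^k * (n.choose k) * ((k-1).choose (j-1))
          = (-1:ℚ)^j := by
        rw [Finset.sum_Icc_succ_top (by omega)]
        rw [Nat.choose_eq_zero_of_lt (by omega : n < n + 1)]
        rw [ih hstep]; simp
      have hB : ∑ k ∈ Finset.Icc 1 (n+1), (-1:ℚ)^k * (n.choose (k-1)) * ((k-1).choose (j-1))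
          = 0 := by
        rw [← Finset.Ico_add_one_right_eq_Icc, Finset.sum_Ico_eq_sum_range]
        have : ∀ i ∈ Finset.range (n + 1 + 1 - 1),
            (-1:ℚ)^(1+i) * (n.choose ((1+i)-1)) * (((1+i)-1).choose (j-1))
            = -((-1:ℚ)^i * (n.choose i) * (i.choose (j-1))) := by
          intro i hi
          have : 1 + i - 1 = i := by omega
          rw [this, pow_add]
          ring
        rw [Finset.sum_congr rfl this, Finset.sum_neg_distrib]
        rw [show n + 1 + 1 - 1 = n + 1 by omega]
        rw [L3 n (j-1) (by omega)]
        simp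
      rw [hA, hB, add_zero]

lemma vand (n k : ℕ) (hk : k ≤ n) :
    (((n + k).choose k : ℕ) : ℚ) = ∑ j ∈ Finset.range (n+1), (n.choose j : ℚ) * (k.choose j) := by
  have h : (n + k).choose k = ∑ j ∈ Finset.range (n+1), n.choose j * k.choose j := by
    rw [Nat.add_choose_eq, Finset.Nat.sum_antidiagonal_eq_sum_range_succ_mk]
    have h1 : ∀ j ∈ Finset.range (k+1), n.choose j * k.choose (k - j) = n.choose j * k.choose j := by
      intro j hj
      simp only [Finset.mem_range] at hj
      rw [Nat.choose_symm (by omega)]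
    rw [Finset.sum_congr rfl h1]
    apply Finset.sum_subset
    · intro x hx; simp only [Finset.mem_range] at *; omega
    · intro x _ hx
      simp only [Finset.mem_range] at hx
      rw [Nat.choose_eq_zero_of_lt (show k < x by omega), Nat.mul_zero]
  rw [h]; push_cast; ring

theorem stmt_1 (n : ℕ) (hn : 1 ≤ n) :
    ∑ k ∈ Finset.Icc 1 n, ((-1 : ℚ) ^ k / k) * (n.choose k) * ((n + k).choose k) =
    -2 * ∑ j ∈ Finset.Icc 1 n, (1 : ℚ) / j := by
  have step1 : ∀ k ∈ Finset.Icc 1 n,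
      ((-1 : ℚ) ^ k / k) * (n.choose k) * ((n + k).choose k) =
      ∑ j ∈ Finset.range (n+1), ((-1 : ℚ) ^ k / k) * (n.choose k) * ((n.choose j : ℚ) * (k.choose j)) := by
    intro k hk
    simp only [Finset.mem_Icc] at hk
    rw [vand n k hk.2, Finset.mul_sum]
  rw [Finset.sum_congr rfl step1, Finset.sum_comm]
  rw [Icc_split n (fun j => ∑ k ∈ Finset.Icc 1 n,
      ((-1 : ℚ) ^ k / k) * (n.choose k) * ((n.choose j : ℚ) * (k.choose j)))]
  have hj0 : ∑ k ∈ Finset.Icc 1 n,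
      ((-1 : ℚ) ^ k / k) * (n.choose k) * ((n.choose 0 : ℚ) * (k.choose 0))
      = -∑ j ∈ Finset.Icc 1 n, (1:ℚ)/j := by
    rw [← L1 n]
    apply Finset.sum_congr rfl
    intro k _
    simp
    ring
  have hjpos : ∀ j ∈ Finset.Icc 1 n, (∑ k ∈ Finset.Icc 1 n,
      ((-1 : ℚ) ^ k / k) * (n.choose k) * ((n.choose j : ℚ) * (k.choose j)))
      = (-1:ℚ)^j * (n.choose j) / j := by
    intro j hj
    simp only [Finset.mem_Icc] at hj
    have hterm : ∀ k ∈ Finset.Icc 1 n,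
        ((-1 : ℚ) ^ k / k) * (n.choose k) * ((n.choose j : ℚ) * (k.choose j))
        = ((n.choose j : ℚ) / j) * ((-1:ℚ)^k * (n.choose k) * ((k-1).choose (j-1))) := by
      intro k hk
      simp only [Finset.mem_Icc] at hk
      have hid : (j : ℚ) * (k.choose j) = (k : ℚ) * ((k-1).choose (j-1)) := by
        have h2 := Nat.add_one_mul_choose_eq (k-1) (j-1)
        rw [show k - 1 + 1 = k by omega, show j - 1 + 1 = j by omega] at h2
        have h3 : ((k * ((k-1).choose (j-1)) : ℕ) : ℚ) = ((k.choose j * j : ℕ) : ℚ) :=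
          congrArg _ h2
        push_cast at h3
        linarith [h3]
      have hk0 : (k:ℚ) ≠ 0 := Nat.cast_ne_zero.mpr (by omega)
      have hj0' : (j:ℚ) ≠ 0 := Nat.cast_ne_zero.mpr (by omega)
      field_simp
      linear_combination ((n.choose k : ℚ) * (n.choose j)) * hid
    rw [Finset.sum_congr rfl hterm, ← Finset.mul_sum, L2 j hj.1 n hj.2]
    ring
  rw [hj0, Finset.sum_congr rfl hjpos]
  have := L1 n
  have hfin : ∑ j ∈ Finset.Icc 1 n, (-1:ℚ)^j * (n.choose j) / j = -∑ j ∈ Finset.Icc 1 n, (1:ℚ)/j := L1 n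
  rw [hfin]
  ring
end

section
/- For every positive integer n, sum_{k=1}^n (-1)^k * C(n,k) * C(n+k,k) * H_k(2) = (-1)^{n-1} * 2 * H_n(-2), where H_k(2) = sum_{j=1}^k 1/j^2 and H_n(-2) = sum_{j=1}^n (-1)^j/j^2. -/
open Finset

-- the telescoping step identity (†), N = p+1, 1 ≤ j ≤ p
lemma key_step (p j : ℕ) (hj : 1 ≤ j) (hjp : j ≤ p) :
    2*(j:ℚ)^2*((p+1).choose j)*((p+j).choose j)
      + 2*((j:ℚ)+1)^2*((p+1).choose (j+1))*((p+1+j).choose (j+1))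
    = ((p:ℚ)+1)^2*(((p+1).choose j)*((p+1+j).choose j)
      + ((p).choose j)*((p+j).choose j)) := by
  have hs : (0:ℚ) < (p:ℚ)+1 - j := by
    have : (j:ℚ) ≤ p := by exact_mod_cast hjp
    linarith
  -- relations
  have r1 : ((p+1).choose j : ℚ) * ((p:ℚ)+1-j) = ((p:ℚ)+1) * (p.choose j) := by
    have := Nat.choose_mul_succ_eq p j
    have h2 : (p + 1 - j : ℕ) = (p - j) + 1 := by omega
    have := congrArg (Nat.cast : ℕ → ℚ) this
    push_cast [h2, Nat.cast_sub hjp] at this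
    push_cast
    linarith [this]
  have r2 : ((j:ℚ)+1) * ((p+1).choose (j+1)) = ((p:ℚ)+1) * (p.choose j) := by
    have := Nat.add_one_mul_choose_eq p j
    have := congrArg (Nat.cast : ℕ → ℚ) this
    push_cast at this ⊢
    linarith
  have r3 : ((j:ℚ)+1) * ((p+1+j).choose (j+1)) = ((p:ℚ)+1+j) * ((p+j).choose j) := by
    have := Nat.add_one_mul_choose_eq (p+j) j
    have := congrArg (Nat.cast : ℕ → ℚ) this
    push_cast at this ⊢
    have e : p + 1 + j = p + j + 1 := by ring
    rw [e]
    push_cast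
    linarith
  have r4 : ((p:ℚ)+1) * ((p+1+j).choose j) = ((p:ℚ)+1+j) * ((p+j).choose j) := by
    have := Nat.choose_mul_succ_eq (p+j) j
    have h2 : (p + j + 1 - j : ℕ) = p + 1 := by omega
    have := congrArg (Nat.cast : ℕ → ℚ) this
    rw [h2] at this
    have e : p + 1 + j = p + j + 1 := by ring
    rw [e]
    push_cast at this ⊢
    linarith
  -- solve: express things as fractions
  have hj1 : ((j:ℚ)+1) ≠ 0 := by positivity
  have hp1 : ((p:ℚ)+1) ≠ 0 := by positivity
  have hc : ((p+1).choose j : ℚ) = ((p:ℚ)+1) * (p.choose j) / ((p:ℚ)+1-j) := by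
    field_simp [ne_of_gt hs]; linarith [r1]
  have he : ((p+1).choose (j+1) : ℚ) = ((p:ℚ)+1) * (p.choose j) / ((j:ℚ)+1) := by
    field_simp; linarith [r2]
  have hf : ((p+1+j).choose (j+1) : ℚ) = ((p:ℚ)+1+j) * ((p+j).choose j) / ((j:ℚ)+1) := by
    field_simp; linarith [r3]
  have hd : ((p+1+j).choose j : ℚ) = ((p:ℚ)+1+j) * ((p+j).choose j) / ((p:ℚ)+1) := by
    field_simp; linarith [r4]
  rw [hc, he, hf, hd]
  field_simp [ne_of_gt hs]
  ring
lemma tail_sum (p : ℕ) : ∀ d j : ℕ, j + d = p + 1 → 1 ≤ j →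
    ∑ k ∈ Icc j (p+1), (-1:ℚ)^k * (((p+1).choose k) * ((p+1+k).choose k)
        + ((p).choose k) * ((p+k).choose k))
    = (-1:ℚ)^j * 2 * (j:ℚ)^2 * ((p+1).choose j) * ((p+j).choose j) / ((p:ℚ)+1)^2 := by
  intro d
  induction d with
  | zero =>
    intro j hj _
    have hj' : j = p + 1 := by omega
    subst hj'
    rw [Icc_self, Finset.sum_singleton]
    rw [Nat.choose_succ_self, Nat.choose_self]
    have hc : (p+1+(p+1)).choose (p+1) = 2 * (p+(p+1)).choose (p+1) := by
      have e : p+1+(p+1) = (p+(p+1)) + 1 := by omega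
      rw [e, Nat.choose_succ_succ' (p+(p+1)) p]
      have e2 : p+(p+1) = 2*p+1 := by omega
      rw [e2]
      have := Nat.choose_symm_half p
      omega
    rw [hc]
    have hp1 : ((p:ℚ)+1) ≠ 0 := by positivity
    push_cast
    field_simp
    ring
  | succ d ih =>
    intro j hj hj1
    have hjp : j ≤ p := by omega
    have hlt : j ≤ p + 1 := by omega
    rw [← Finset.Ioc_insert_left hlt, Finset.sum_insert (by simp)]
    rw [← Finset.Icc_add_one_left_eq_Ioc]
    rw [ih (j+1) (by omega) (by omega), show p + (j+1) = p+1+j from by omega]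
    have key := key_step p j hj1 hjp
    have hp1 : ((p:ℚ)+1) ≠ 0 := by positivity
    have hp2 : ((p:ℚ)+1)^2 ≠ 0 := pow_ne_zero _ hp1
    field_simp
    push_cast
    linear_combination (-(-1:ℚ)^j) * key


lemma inner_alt (N i : ℕ) (hi : i < N) :
    ∑ j ∈ range (N+1), (-1:ℚ)^j * (N.choose j) * (j.choose i) = 0 := by
  have h1 : ∑ j ∈ range (N+1), (-1:ℚ)^j * (N.choose j) * (j.choose i)
      = ∑ j ∈ Ico i (N+1), (-1:ℚ)^j * (N.choose j) * (j.choose i) := by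
    rw [range_eq_Ico]
    refine (Finset.sum_subset (Finset.Ico_subset_Ico (Nat.zero_le _) le_rfl) ?_).symm
    intro x hx hx2
    simp only [mem_Ico] at hx hx2
    have : x < i := by omega
    rw [Nat.choose_eq_zero_of_lt this]
    simp
  rw [h1, Finset.sum_Ico_eq_sum_range]
  have h2 : ∀ t ∈ range (N+1-i), (-1:ℚ)^(i+t) * (N.choose (i+t)) * ((i+t).choose i)
      = ((-1:ℚ)^i * N.choose i) * ((-1:ℚ)^t * ((N-i).choose t)) := by
    intro t ht
    simp only [mem_range] at ht
    have hit : i + t ≤ N := by omega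
    have := Nat.choose_mul (n := N) (Nat.le_add_right i t)
    rw [Nat.add_sub_cancel_left] at this
    have hcast := congrArg (Nat.cast : ℕ → ℚ) this
    push_cast at hcast
    rw [pow_add]
    linear_combination ((-1:ℚ)^i*(-1:ℚ)^t) * hcast
  rw [Finset.sum_congr rfl h2, ← Finset.mul_sum]
  have h3 : N + 1 - i = (N - i) + 1 := by omega
  rw [h3]
  have h4 : ∑ t ∈ range ((N-i)+1), (-1:ℚ)^t * ((N-i).choose t) = 0 := by
    have := Int.alternating_sum_range_choose_of_ne (n := N - i) (by omega)
    have := congrArg (Int.cast : ℤ → ℚ) this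
    push_cast at this
    convert this using 2
  rw [h4, mul_zero]

lemma L1_s3 (N : ℕ) (hN : 1 ≤ N) :
    ∑ j ∈ range (N+1), (-1:ℚ)^j * (N.choose j) * ((N-1+j).choose j) = 0 := by
  have vand : ∀ j ∈ range (N+1), ((N-1+j).choose j : ℚ)
      = ∑ a ∈ range (N+1), ((N-1).choose a : ℚ) * (j.choose a) := by
    intro j hj
    simp only [mem_range] at hj
    have := Nat.add_choose_eq (N-1) j j
    rw [Finset.Nat.sum_antidiagonal_eq_sum_range_succ_mk] at this
    have h2 : ∑ a ∈ range (j+1), ((N-1).choose a : ℚ) * (j.choose a)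
        = ∑ a ∈ range (j+1), ((N-1).choose a : ℚ) * (j.choose (j - a)) := by
      refine Finset.sum_congr rfl fun a ha => ?_
      simp only [mem_range] at ha
      rw [Nat.choose_symm (by omega)]
    have h3 : ∑ a ∈ range (N+1), ((N-1).choose a : ℚ) * (j.choose a)
        = ∑ a ∈ range (j+1), ((N-1).choose a : ℚ) * (j.choose a) := by
      refine (Finset.sum_subset ?_ ?_).symm
      · exact Finset.range_subset_range.2 (by omega)
      · intro x hx hx2
        simp only [mem_range] at hx hx2
        rw [Nat.choose_eq_zero_of_lt (show j < x by omega)]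
        simp
    rw [h3, h2, this]
    push_cast
    rfl
  rw [Finset.sum_congr rfl (fun j hj => by rw [vand j hj])]
  have swap : ∑ j ∈ range (N+1), (-1:ℚ)^j * (N.choose j) *
        (∑ a ∈ range (N+1), ((N-1).choose a : ℚ) * (j.choose a))
      = ∑ a ∈ range (N+1), ((N-1).choose a : ℚ) *
        (∑ j ∈ range (N+1), (-1:ℚ)^j * (N.choose j) * (j.choose a)) := by
    simp_rw [Finset.mul_sum]
    rw [Finset.sum_comm]
    refine Finset.sum_congr rfl fun a _ => Finset.sum_congr rfl fun j _ => by ring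
  rw [swap]
  refine Finset.sum_eq_zero fun a ha => ?_
  simp only [mem_range] at ha
  rcases lt_or_eq_of_le (Nat.lt_succ_iff.1 ha) with h | h
  · rw [inner_alt N a h, mul_zero]
  · subst h
    rw [Nat.choose_eq_zero_of_lt (by omega)]
    simp



lemma key (p : ℕ) :
    ∑ k ∈ Icc 1 (p+1), (-1:ℚ)^k * (((p+1).choose k) * ((p+1+k).choose k)
        + ((p).choose k) * ((p+k).choose k)) * (∑ j ∈ Icc 1 k, (1:ℚ)/(j:ℚ)^2)
    = -2 / ((p:ℚ)+1)^2 := by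
  set N := p + 1 with hN
  -- turn into double sum and swap
  have swap := Finset.sum_Ico_Ico_comm 1 (N+1) (fun i k =>
    ((-1:ℚ)^k * (((p+1).choose k) * ((p+1+k).choose k)
        + ((p).choose k) * ((p+k).choose k))) * ((1:ℚ)/(i:ℚ)^2))
  have lhs_eq : ∑ k ∈ Icc 1 N, (-1:ℚ)^k * (((p+1).choose k) * ((p+1+k).choose k)
        + ((p).choose k) * ((p+k).choose k)) * (∑ j ∈ Icc 1 k, (1:ℚ)/(j:ℚ)^2)
      = ∑ k ∈ Ico 1 (N+1), ∑ i ∈ Ico 1 (k+1),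
        ((-1:ℚ)^k * (((p+1).choose k) * ((p+1+k).choose k)
        + ((p).choose k) * ((p+k).choose k))) * ((1:ℚ)/(i:ℚ)^2) := by
    rw [← Finset.Ico_add_one_right_eq_Icc]
    refine Finset.sum_congr rfl fun k _ => ?_
    rw [Finset.mul_sum, ← Finset.Ico_add_one_right_eq_Icc]
  rw [lhs_eq, ← swap]
  have step : ∀ i ∈ Ico 1 (N+1),
      ∑ k ∈ Ico i (N+1), ((-1:ℚ)^k * (((p+1).choose k) * ((p+1+k).choose k)
        + ((p).choose k) * ((p+k).choose k))) * ((1:ℚ)/(i:ℚ)^2)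
      = ((-1:ℚ)^i * 2 * ((p+1).choose i) * ((p+i).choose i)) / ((p:ℚ)+1)^2 := by
    intro i hi
    simp only [mem_Ico] at hi
    rw [← Finset.sum_mul, Finset.Ico_add_one_right_eq_Icc]
    rw [tail_sum p (N - i) i (by omega) hi.1]
    have hi0 : ((i:ℚ))^2 ≠ 0 := by
      have : (0:ℚ) < i := by exact_mod_cast hi.1
      positivity
    have hi1 : (i:ℚ) ≠ 0 := by exact_mod_cast (show i ≠ 0 by omega)
    field_simp
  rw [Finset.sum_congr rfl step]
  -- now use L1
  have l1 := L1_s3 N (by omega)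
  rw [Finset.sum_range_succ' _ N] at l1
  simp only [pow_zero, Nat.choose_zero_right, Nat.cast_one, one_mul, mul_one, add_zero] at l1
  -- l1 : ∑ i in range N, (-1)^(i+1) * C(N,i+1)*C(N-1+(i+1), i+1) + 1 = 0
  have hsum : ∑ i ∈ Ico 1 (N+1), ((-1:ℚ)^i * 2 * ((p+1).choose i) * ((p+i).choose i)) / ((p:ℚ)+1)^2
      = (2 / ((p:ℚ)+1)^2) * ∑ i ∈ range N, (-1:ℚ)^(i+1) * (N.choose (i+1)) * ((N-1+(i+1)).choose (i+1)) := by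
    rw [Finset.sum_Ico_eq_sum_range, Finset.mul_sum]
    simp only [Nat.add_sub_cancel]
    refine Finset.sum_congr rfl fun t _ => ?_
    have e1 : 1 + t = t + 1 := by omega
    have e2 : N - 1 + (t+1) = p + (t+1) := by omega
    rw [e1, e2]
    ring
  rw [hsum]
  have : ∑ i ∈ range N, (-1:ℚ)^(i+1) * (N.choose (i+1)) * ((N-1+(i+1)).choose (i+1)) = -1 := by
    linarith [l1]
  rw [this]
  ring


theorem stmt_3 (n : ℕ) (hn : 1 ≤ n) :
    ∑ k ∈ Finset.Icc 1 n, (-1 : ℚ) ^ k * (n.choose k) * ((n + k).choose k) *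
      (∑ j ∈ Finset.Icc 1 k, (1 : ℚ) / (j : ℚ) ^ 2) =
    (-1 : ℚ) ^ (n - 1) * 2 * ∑ j ∈ Finset.Icc 1 n, (-1 : ℚ) ^ j / (j : ℚ) ^ 2 := by
  induction n, hn using Nat.le_induction with
  | base =>
    rw [show (1:ℕ) = 0 + 1 from rfl]
    norm_num [Finset.Icc_self]
  | succ n hn ih =>
    obtain ⟨m, rfl⟩ : ∃ m, n = m + 1 := ⟨n - 1, by omega⟩
    have hkey := key (m + 1)
    -- split key's sum
    have split : ∑ k ∈ Icc 1 (m+1+1), (-1:ℚ)^k * (((m+1+1).choose k) * ((m+1+1+k).choose k)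
        + ((m+1).choose k) * ((m+1+k).choose k)) * (∑ j ∈ Icc 1 k, (1:ℚ)/(j:ℚ)^2)
      = (∑ k ∈ Icc 1 (m+1+1), (-1:ℚ)^k * ((m+1+1).choose k) * ((m+1+1+k).choose k)
            * (∑ j ∈ Icc 1 k, (1:ℚ)/(j:ℚ)^2))
        + (∑ k ∈ Icc 1 (m+1+1), (-1:ℚ)^k * ((m+1).choose k) * ((m+1+k).choose k)
            * (∑ j ∈ Icc 1 k, (1:ℚ)/(j:ℚ)^2)) := by
      rw [← Finset.sum_add_distrib]
      exact Finset.sum_congr rfl fun k _ => by ring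
    rw [split] at hkey
    have htop : ∑ k ∈ Icc 1 (m+1+1), (-1:ℚ)^k * ((m+1).choose k) * ((m+1+k).choose k)
            * (∑ j ∈ Icc 1 k, (1:ℚ)/(j:ℚ)^2)
        = ∑ k ∈ Icc 1 (m+1), (-1:ℚ)^k * ((m+1).choose k) * ((m+1+k).choose k)
            * (∑ j ∈ Icc 1 k, (1:ℚ)/(j:ℚ)^2) := by
      rw [Finset.sum_Icc_succ_top (by omega)]
      rw [Nat.choose_succ_self]
      push_cast
      ring
    rw [htop, ih] at hkey
    -- now hkey : goalLHS + (-1)^(m+1-1)*2*∑ = -2/((m+1)+1)^2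
    have hrhs : (-1:ℚ)^(m+1+1-1) * 2 * ∑ j ∈ Finset.Icc 1 (m+1+1), (-1:ℚ)^j / (j:ℚ)^2
        = -((-1:ℚ)^(m+1-1) * 2 * ∑ j ∈ Finset.Icc 1 (m+1), (-1:ℚ)^j / (j:ℚ)^2)
          - 2/(((m:ℚ)+1)+1)^2 := by
      rw [Finset.sum_Icc_succ_top (show 1 ≤ m+1+1 by omega)]
      have e1 : m+1+1-1 = m+1 := by omega
      have e2 : m+1-1 = m := by omega
      rw [e1, e2]
      have h1 : (-1:ℚ)^m * (-1)^m = 1 := by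
        rw [← pow_add, ← two_mul, pow_mul, neg_one_sq, one_pow]
      push_cast
      rw [pow_succ, pow_succ]
      linear_combination (-2/(((m:ℚ)+1+1)^2)) * h1
    rw [hrhs]
    push_cast at hkey ⊢
    linear_combination hkey
end

section
/- For every positive integer n, sum_{k=1}^n ((-1)^k / k^2) * C(n,k) * C(n+k,k) * H_k(2) = -(2 * H_n(4) + 4 * H_n(3,1)), where H_n(4) = sum_{j=1}^n 1/j^4 and H_n(3,1) = sum_{1<=i<j<=n} 1/(i^3 * j). -/
open Finset

/-- harmonic-type sum `H_k(2)` -/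
def Hq (k : ℕ) : ℚ := ∑ j ∈ Finset.Icc 1 k, (1 : ℚ) / (j : ℚ) ^ 2

/-- summand of the LHS -/
def Fq (n k : ℕ) : ℚ :=
  ((-1 : ℚ) ^ k / (k : ℚ) ^ 2) * (n.choose k) * ((n + k).choose k) * Hq k

def Sq (n : ℕ) : ℚ := ∑ k ∈ Finset.Icc 1 n, Fq n k

def Rq (n : ℕ) : ℚ :=
  -(2 * ∑ j ∈ Finset.Icc 1 n, (1 : ℚ) / (j : ℚ) ^ 4 +
    4 * ∑ j ∈ Finset.Icc 1 n, ∑ i ∈ Finset.Icc 1 (j - 1), (1 : ℚ) / ((i : ℚ) ^ 3 * j))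

/-- polynomial part of the WZ-style certificate -/
def Nq (n k : ℚ) : ℚ :=
  n^6+9*n^5+34*n^4+69*n^3+79*n^2+48*n+12 - k*(n^4+6*n^3+13*n^2+12*n+4)
    - k^2*(n^4+6*n^3+16*n^2+21*n+11) + k^3*(2*n^2+6*n+5)

/-- the certificate -/
def Gq (n k : ℕ) : ℚ :=
  2*(2*(n:ℚ)+3)*(-1)^k*((n+2).choose k)*((n+k).choose k)/(((n:ℚ)+1)^3*((n:ℚ)+2)^3) *
    ( -(k:ℚ)^2*((n:ℚ)^2+3*(n:ℚ)+3-(k:ℚ))*Hq k + Nq (n:ℚ) (k:ℚ)/(((n:ℚ)+1)^2*((n:ℚ)+2)^2) )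

lemma B1nat (m k : ℕ) : (m+1-k) * (m+1).choose k = (m+1) * m.choose k := by
  rw [Nat.add_one_mul_choose_eq, Nat.choose_succ_right_eq, mul_comm]

lemma B1 (m k : ℕ) : ((m:ℚ)+1-(k:ℚ)) * ((m+1).choose k : ℚ) = ((m:ℚ)+1) * (m.choose k : ℚ) := by
  rcases le_or_gt k (m+1) with h | h
  · have h1 := B1nat m k
    have h2 : (((m+1-k) * (m+1).choose k : ℕ) : ℚ) = (((m+1) * m.choose k : ℕ) : ℚ) := by
      exact_mod_cast h1
    push_cast [h] at h2
    linear_combination h2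
  · rw [Nat.choose_eq_zero_of_lt h, Nat.choose_eq_zero_of_lt (by omega : m < k)]
    simp

lemma B2 (m k : ℕ) : ((k:ℚ)+1) * ((m+1).choose (k+1) : ℚ) = ((m:ℚ)+1) * (m.choose k : ℚ) := by
  have h1 := Nat.add_one_mul_choose_eq m k
  have h2 : (((m+1) * m.choose k : ℕ) : ℚ) = (((m+1).choose (k+1) * (k+1) : ℕ) : ℚ) := by
    exact_mod_cast h1
  push_cast at h2
  linear_combination -h2

lemma B3 (m k : ℕ) : ((k:ℚ)+1) * (m.choose (k+1) : ℚ) = ((m:ℚ)-(k:ℚ)) * (m.choose k : ℚ) := by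
  rcases le_or_gt k m with h | h
  · have h1 := Nat.choose_succ_right_eq m k
    have h2 : ((m.choose (k+1) * (k+1) : ℕ) : ℚ) = ((m.choose k * (m-k) : ℕ) : ℚ) := by
      exact_mod_cast h1
    push_cast [h] at h2
    linear_combination h2
  · rw [Nat.choose_eq_zero_of_lt h, Nat.choose_eq_zero_of_lt (by omega : m < k+1)]
    simp

lemma point (n k : ℕ) (hk : 1 ≤ k) :
    ((n:ℚ)+1) * Fq n k - (2*(n:ℚ)+3) * Fq (n+1) k + ((n:ℚ)+2) * Fq (n+2) k
      = Gq n (k+1) - Gq n k := by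
  have hk0 : (k:ℚ) ≠ 0 := Nat.cast_ne_zero.mpr (by omega)
  have hk1 : (k:ℚ)+1 ≠ 0 := by positivity
  have hn1 : (n:ℚ)+1 ≠ 0 := by positivity
  have hn2 : (n:ℚ)+2 ≠ 0 := by positivity
  have hH : Hq (k+1) = Hq k + 1/((k:ℚ)+1)^2 := by
    unfold Hq
    rw [Finset.sum_Icc_succ_top (by omega : 1 ≤ k+1)]
    push_cast
    ring
  have e1 : (((n+1)).choose k : ℚ) = ((n:ℚ)+2-(k:ℚ))*(((n+2)).choose k : ℚ)/((n:ℚ)+2) := by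
    rw [eq_div_iff hn2]
    have h1 := B1 (n+1) k
    push_cast at h1 ⊢
    linear_combination -h1
  have e2 : (n.choose k : ℚ)
      = ((n:ℚ)+1-(k:ℚ))*((n:ℚ)+2-(k:ℚ))*(((n+2)).choose k : ℚ)/(((n:ℚ)+1)*((n:ℚ)+2)) := by
    rw [eq_div_iff (mul_ne_zero hn1 hn2)]
    have h1 := B1 n k
    have h2 := B1 (n+1) k
    push_cast at h1 h2 ⊢
    linear_combination (-((n:ℚ)+2))*h1 - (((n:ℚ)+1-(k:ℚ)))*h2
  have e3 : (((n+2)).choose (k+1) : ℚ) = ((n:ℚ)+2-(k:ℚ))*(((n+2)).choose k : ℚ)/((k:ℚ)+1) := by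
    rw [eq_div_iff hk1]
    have h1 := B3 (n+2) k
    push_cast at h1 ⊢
    linear_combination h1
  have e4 : (((n+k)+1).choose k : ℚ) = ((n:ℚ)+(k:ℚ)+1)*(((n+k)).choose k : ℚ)/((n:ℚ)+1) := by
    rw [eq_div_iff hn1]
    have h1 := B1 (n+k) k
    push_cast at h1 ⊢
    linear_combination h1
  have e5 : (((n+k)+1+1).choose k : ℚ)
      = ((n:ℚ)+(k:ℚ)+1)*((n:ℚ)+(k:ℚ)+2)*(((n+k)).choose k : ℚ)/(((n:ℚ)+1)*((n:ℚ)+2)) := by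
    rw [eq_div_iff (mul_ne_zero hn1 hn2)]
    have h1 := B1 ((n+k)+1) k
    have h2 := B1 (n+k) k
    push_cast at h1 h2 ⊢
    linear_combination ((n:ℚ)+1)*h1 + (((n:ℚ)+(k:ℚ)+2))*h2
  have e6 : (((n+k)+1).choose (k+1) : ℚ) = ((n:ℚ)+(k:ℚ)+1)*(((n+k)).choose k : ℚ)/((k:ℚ)+1) := by
    rw [eq_div_iff hk1]
    have h1 := B2 (n+k) k
    push_cast at h1 ⊢
    linear_combination h1
  unfold Fq Gq
  rw [show n+1+k = (n+k)+1 by omega, show n+2+k = (n+k)+1+1 by omega,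
    show n+(k+1) = (n+k)+1 by omega]
  rw [hH, e1, e2, e3, e4, e5, e6]
  unfold Nq
  push_cast
  field_simp
  ring

lemma tele (f : ℕ → ℚ) (m : ℕ) : ∑ k ∈ Finset.Icc 1 m, (f (k+1) - f k) = f (m+1) - f 1 := by
  induction m with
  | zero => simp
  | succ m ih =>
    rw [Finset.sum_Icc_succ_top (by omega : 1 ≤ m+1), ih]
    ring

lemma extS (m j : ℕ) : ∑ k ∈ Finset.Icc 1 (m+j), Fq m k = Sq m := by
  induction j with
  | zero => rfl
  | succ j ih =>
    have hz : (m.choose (m+j+1) : ℚ) = 0 := by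
      rw [Nat.choose_eq_zero_of_lt (by omega)]; simp
    rw [show m+(j+1) = (m+j)+1 by omega,
      Finset.sum_Icc_succ_top (by omega : 1 ≤ (m+j)+1)]
    unfold Fq
    rw [hz]
    simpa [Fq] using ih

lemma Grig (n : ℕ) : Gq n (n+3) = 0 := by
  have hz : ((n+2).choose (n+3) : ℚ) = 0 := by
    rw [Nat.choose_eq_zero_of_lt (by omega)]; simp
  unfold Gq
  rw [hz]
  ring

lemma Gone (n : ℕ) : Gq n 1 = 2/((n:ℚ)+1)^3 + 2/((n:ℚ)+2)^3 := by
  have hn1 : (n:ℚ)+1 ≠ 0 := by positivity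
  have hn2 : (n:ℚ)+2 ≠ 0 := by positivity
  have hH1 : Hq 1 = 1 := by
    unfold Hq
    rw [Finset.Icc_self, Finset.sum_singleton]
    norm_num
  unfold Gq Nq
  rw [hH1, Nat.choose_one_right, Nat.choose_one_right]
  push_cast
  field_simp
  ring

lemma Srec (n : ℕ) :
    ((n:ℚ)+1)*Sq n - (2*(n:ℚ)+3)*Sq (n+1) + ((n:ℚ)+2)*Sq (n+2)
      = -2/((n:ℚ)+1)^3 - 2/((n:ℚ)+2)^3 := by
  have h1 : ∑ k ∈ Finset.Icc 1 (n+2),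
      (((n:ℚ)+1) * Fq n k - (2*(n:ℚ)+3) * Fq (n+1) k + ((n:ℚ)+2) * Fq (n+2) k)
      = ∑ k ∈ Finset.Icc 1 (n+2), (Gq n (k+1) - Gq n k) := by
    refine Finset.sum_congr rfl fun k hk => ?_
    exact point n k (Finset.mem_Icc.mp hk).1
  rw [tele (Gq n) (n+2), Grig n, Gone n] at h1
  have h2 : ∑ k ∈ Finset.Icc 1 (n+2),
      (((n:ℚ)+1) * Fq n k - (2*(n:ℚ)+3) * Fq (n+1) k + ((n:ℚ)+2) * Fq (n+2) k)
      = ((n:ℚ)+1)*Sq n - (2*(n:ℚ)+3)*Sq (n+1) + ((n:ℚ)+2)*Sq (n+2) := by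
    rw [Finset.sum_add_distrib, Finset.sum_sub_distrib,
      ← Finset.mul_sum, ← Finset.mul_sum, ← Finset.mul_sum]
    rw [extS n 2, show n+2 = (n+1)+1 from rfl, extS (n+1) 1, extS (n+2) 0]
  rw [h2] at h1
  rw [h1]
  ring

lemma Rstep (m : ℕ) :
    Rq (m+1) = Rq m - 2/((m:ℚ)+1)^4
      - 4/((m:ℚ)+1) * (∑ i ∈ Finset.Icc 1 m, (1:ℚ)/(i:ℚ)^3) := by
  have hm1 : (m:ℚ)+1 ≠ 0 := by positivity
  unfold Rq
  rw [Finset.sum_Icc_succ_top (by omega : 1 ≤ m+1),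
    Finset.sum_Icc_succ_top (by omega : 1 ≤ m+1)]
  rw [show (m+1)-1 = m from rfl]
  have h3 : ∑ i ∈ Finset.Icc 1 m, (1:ℚ)/((i:ℚ)^3*((m+1:ℕ):ℚ))
      = (∑ i ∈ Finset.Icc 1 m, (1:ℚ)/(i:ℚ)^3) * (1/((m:ℚ)+1)) := by
    rw [Finset.sum_mul]
    refine Finset.sum_congr rfl fun i hi => ?_
    have hi0 : (i:ℚ) ≠ 0 := Nat.cast_ne_zero.mpr (by have := (Finset.mem_Icc.mp hi).1; omega)
    push_cast
    field_simp
  rw [h3]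
  push_cast
  field_simp
  ring

lemma Rrec (n : ℕ) :
    ((n:ℚ)+1)*Rq n - (2*(n:ℚ)+3)*Rq (n+1) + ((n:ℚ)+2)*Rq (n+2)
      = -2/((n:ℚ)+1)^3 - 2/((n:ℚ)+2)^3 := by
  have hn1 : (n:ℚ)+1 ≠ 0 := by positivity
  have hn2 : (n:ℚ)+2 ≠ 0 := by positivity
  have d1 := Rstep n
  have d2 := Rstep (n+1)
  have hsum : ∑ i ∈ Finset.Icc 1 (n+1), (1:ℚ)/(i:ℚ)^3
      = (∑ i ∈ Finset.Icc 1 n, (1:ℚ)/(i:ℚ)^3) + 1/((n:ℚ)+1)^3 := by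
    rw [Finset.sum_Icc_succ_top (by omega : 1 ≤ n+1)]
    push_cast
    ring
  rw [hsum] at d2
  push_cast at d1 d2
  rw [d2, d1]
  field_simp
  ring

lemma base1 : Sq 1 = Rq 1 := by
  unfold Sq Rq Fq Hq
  norm_num

lemma base2 : Sq 2 = Rq 2 := by
  have c42 : Nat.choose 4 2 = 6 := by decide
  unfold Sq Rq Fq Hq
  rw [show (2:ℕ) = 1+1 from rfl]
  rw [Finset.sum_Icc_succ_top (by omega : 1 ≤ 1+1),
    Finset.sum_Icc_succ_top (by omega : 1 ≤ 1+1),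
    Finset.sum_Icc_succ_top (by omega : 1 ≤ 1+1)]
  norm_num [c42, Finset.sum_Icc_succ_top]

lemma main : ∀ n : ℕ, Sq (n+1) = Rq (n+1) ∧ Sq (n+2) = Rq (n+2) := by
  intro n
  induction n with
  | zero => exact ⟨base1, base2⟩
  | succ m ih =>
    refine ⟨ih.2, ?_⟩
    have hS := Srec (m+1)
    have hR := Rrec (m+1)
    rw [show m+1+1 = m+2 from rfl, show m+1+2 = m+3 from rfl] at hS hR
    rw [ih.1, ih.2] at hS
    have h3 : (((m+1:ℕ):ℚ)+2)*Sq (m+3) = (((m+1:ℕ):ℚ)+2)*Rq (m+3) := by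
      linarith [hS, hR]
    exact mul_left_cancel₀ (by positivity) h3

theorem stmt_11 (n : ℕ) (hn : 1 ≤ n) :
    ∑ k ∈ Finset.Icc 1 n, ((-1 : ℚ) ^ k / (k : ℚ) ^ 2) * (n.choose k) * ((n + k).choose k) *
      (∑ j ∈ Finset.Icc 1 k, (1 : ℚ) / (j : ℚ) ^ 2) =
    -(2 * ∑ j ∈ Finset.Icc 1 n, (1 : ℚ) / (j : ℚ) ^ 4 +
      4 * ∑ j ∈ Finset.Icc 1 n, ∑ i ∈ Finset.Icc 1 (j - 1), (1 : ℚ) / ((i : ℚ) ^ 3 * j)) := by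
  obtain ⟨m, rfl⟩ : ∃ m, n = m+1 := ⟨n-1, by omega⟩
  have h := (main m).1
  unfold Sq Rq Fq Hq at h
  exact h
end
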